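/- In the unified seller game with strictly ordered strengths η_1 > η_2 > ... > η_N > 0, if (η_1 − η_{M+1}) < ε · min{e · min_{k ≤ M} α_k, 1}, then the profile δ* = (η_2, η_3, ..., η_{M+1}, η_{M+1}, δ_{M+2}, ..., δ_N) with δ_k ≤ η_k for k > M+1 is an ε-Nash equilibrium: no seller can improve its utility by more than ε via any unilateral deviation. -/
import Mathlib


/-- Utility of seller `a` in the unified seller game at commission profile `δ`:
positions are assigned by decreasing commission with uniform tie-breaking, only the top `M`
positions count, and position `m` carries the reach factor `γ̃^{m-1}`. -/
noncomputable def sellerUtil (N M : ℕ) (γt : ℝ) (η α : Fin N → ℝ)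
    (δ : Fin N → ℝ) (a : Fin N) : ℝ :=
  let S := (Finset.univ.filter fun b => δ a < δ b).card
  let T := (Finset.univ.filter fun b => δ b = δ a).card
  ((η a - δ a) / (Real.exp 1 * α a)) *
    (((Finset.range T).sum fun i => if S + i + 1 ≤ M then γt ^ (S + i) else 0) / (T : ℝ))

/-- With strictly ordered strengths and a small gap `η_1 − η_{M+1}`, the profile
`δ* = (η_2, …, η_{M+1}, η_{M+1}, δ_{M+2}, …, δ_N)` (with `δ_k ≤ η_k` for `k > M+1`)
is an ε-Nash equilibrium of the unified seller game. -/
theorem stmt6 (N M : ℕ) (hM : 1 ≤ M) (hMN : M + 1 ≤ N)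
    (γt : ℝ) (hγt : γt ∈ Set.Ioo (0 : ℝ) 1)
    (η α : Fin N → ℝ) (hα : ∀ a, 0 < α a)
    (hηdec : ∀ a b : Fin N, a < b → η b < η a) (hηpos : ∀ a, 0 < η a)
    (ε : ℝ) (hε : 0 < ε)
    (hgap : ∀ k : Fin N, (k : ℕ) < M →
      η ⟨0, by omega⟩ - η ⟨M, by omega⟩ < ε * min (Real.exp 1 * α k) 1)
    (δ : Fin N → ℝ)
    (hδ1 : ∀ k : Fin N, (h : (k : ℕ) < M) → δ k = η ⟨(k : ℕ) + 1, by omega⟩)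
    (hδ2 : δ ⟨M, by omega⟩ = η ⟨M, by omega⟩)
    (hδ3 : ∀ k : Fin N, M < (k : ℕ) → δ k ≤ η k) :
    ∀ a : Fin N, ∀ d ∈ Set.Icc (0 : ℝ) 1,
      sellerUtil N M γt η α (Function.update δ a d) a ≤ sellerUtil N M γt η α δ a + ε := by
  
  obtain ⟨hγ0, hγ1⟩ := hγt
  have he0 : (0:ℝ) < Real.exp 1 := Real.exp_pos 1
  have hMlt : M < N := by omega
  -- δ b ≥ η_M for all b ≤ M
  have hkey : ∀ b : Fin N, (b : ℕ) ≤ M → η ⟨M, hMlt⟩ ≤ δ b := by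
    intro b hb
    rcases lt_or_eq_of_le hb with h | h
    · rw [hδ1 b h]
      rcases lt_or_eq_of_le (Nat.succ_le_of_lt h) with h2 | h2
      · exact le_of_lt (hηdec ⟨(b:ℕ)+1, by omega⟩ ⟨M, hMlt⟩ h2)
      · have : (⟨(b:ℕ)+1, by omega⟩ : Fin N) = ⟨M, hMlt⟩ := by
          apply Fin.ext
          show (b:ℕ) + 1 = M
          omega
        rw [this]
    · have hb' : b = ⟨M, hMlt⟩ := Fin.ext h
      rw [hb', hδ2]
  have hδle : ∀ b : Fin N, δ b ≤ η b := by
    intro b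
    rcases lt_trichotomy (b : ℕ) M with h | h | h
    · rw [hδ1 b h]
      exact le_of_lt (hηdec b ⟨(b:ℕ)+1, by omega⟩ (Nat.lt_succ_self _))
    · have hb' : b = ⟨M, hMlt⟩ := Fin.ext h
      rw [hb', hδ2]
    · exact hδ3 b h
  intro a d hd
  -- old utility is nonnegative
  have hU0 : 0 ≤ sellerUtil N M γt η α δ a := by
    unfold sellerUtil
    apply mul_nonneg
    · exact div_nonneg (sub_nonneg.2 (hδle a)) (le_of_lt (mul_pos he0 (hα a)))
    · apply div_nonneg
      · apply Finset.sum_nonneg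
        intro i _
        split
        · positivity
        · exact le_refl 0
      · positivity
  set δ' := Function.update δ a d with hδ'def
  have hδ'a : δ' a = d := Function.update_self a d δ
  have hδ'b : ∀ b, b ≠ a → δ' b = δ b := fun b hb => Function.update_of_ne hb d δ
  have main : sellerUtil N M γt η α δ' a ≤ ε := by
    show ((η a - δ' a) / (Real.exp 1 * α a)) *
      (((Finset.range ((Finset.univ.filter fun b => δ' b = δ' a).card)).sum fun i =>
        if (Finset.univ.filter fun b => δ' a < δ' b).card + i + 1 ≤ M
        then γt ^ ((Finset.univ.filter fun b => δ' a < δ' b).card + i) else 0) /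
        (((Finset.univ.filter fun b => δ' b = δ' a).card : ℕ) : ℝ)) ≤ ε
    set S := (Finset.univ.filter fun b => δ' a < δ' b).card with hS
    set T := (Finset.univ.filter fun b => δ' b = δ' a).card with hT
    have hTpos : 0 < T := Finset.card_pos.2 ⟨a, by simp⟩
    have hr0 : 0 ≤ ((Finset.range T).sum fun i =>
        if S + i + 1 ≤ M then γt ^ (S + i) else 0) / (T : ℝ) := by
      apply div_nonneg
      · apply Finset.sum_nonneg
        intro i _
        split
        · positivity
        · exact le_refl 0
      · positivity
    have hr1 : ((Finset.range T).sum fun i =>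
        if S + i + 1 ≤ M then γt ^ (S + i) else 0) / (T : ℝ) ≤ 1 := by
      rw [div_le_one (by exact_mod_cast hTpos)]
      calc ((Finset.range T).sum fun i => if S + i + 1 ≤ M then γt ^ (S + i) else 0)
          ≤ (Finset.range T).sum (fun _ => (1:ℝ)) := by
            apply Finset.sum_le_sum
            intro i _
            split
            · exact pow_le_one₀ hγ0.le hγ1.le
            · norm_num
        _ = T := by simp
    rcases le_or_gt (η a) d with hda | hda
    · -- deviation above own strength: utility nonpositive
      rw [hδ'a]
      have h1 : (η a - d) / (Real.exp 1 * α a) ≤ 0 :=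
        div_nonpos_iff.2 (Or.inr ⟨by linarith, le_of_lt (mul_pos he0 (hα a))⟩)
      calc ((η a - d) / (Real.exp 1 * α a)) * _ ≤ 0 :=
            mul_nonpos_of_nonpos_of_nonneg h1 hr0
        _ ≤ ε := hε.le
    · rcases lt_or_ge d (η ⟨M, hMlt⟩) with hdM | hdM
      · -- d below η_M : pushed out of the menu, utility 0
        have hMS : M ≤ S := by
          have hmem : ∀ i : Fin M,
              (⟨if (i:ℕ) < (a:ℕ) then (i:ℕ) else (i:ℕ)+1, by split <;> omega⟩ : Fin N)
                ∈ Finset.univ.filter fun b => δ' a < δ' b := by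
            intro i
            have hne : (⟨if (i:ℕ) < (a:ℕ) then (i:ℕ) else (i:ℕ)+1,
                by split <;> omega⟩ : Fin N) ≠ a := by
              rw [Fin.ne_iff_vne]
              show (if (i:ℕ) < (a:ℕ) then (i:ℕ) else (i:ℕ)+1) ≠ (a:ℕ)
              split <;> omega
            have hle : ((⟨if (i:ℕ) < (a:ℕ) then (i:ℕ) else (i:ℕ)+1,
                by split <;> omega⟩ : Fin N) : ℕ) ≤ M := by
              show (if (i:ℕ) < (a:ℕ) then (i:ℕ) else (i:ℕ)+1) ≤ M
              split <;> omega
            simp only [Finset.mem_filter, Finset.mem_univ, true_and]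
            rw [hδ'a, hδ'b _ hne]
            linarith [hkey _ hle]
          have hinj : Set.InjOn
              (fun i : Fin M => (⟨if (i:ℕ) < (a:ℕ) then (i:ℕ) else (i:ℕ)+1,
                by split <;> omega⟩ : Fin N))
              (Finset.univ : Finset (Fin M)) := by
            intro i _ j _ hij
            apply Fin.ext
            have hij' : (if (i:ℕ) < (a:ℕ) then (i:ℕ) else (i:ℕ)+1)
                = (if (j:ℕ) < (a:ℕ) then (j:ℕ) else (j:ℕ)+1) := by
              simpa using congrArg Fin.val hij
            split_ifs at hij' <;> omega
          calc M = (Finset.univ : Finset (Fin M)).card := by simp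
            _ ≤ S := Finset.card_le_card_of_injOn _ (fun i _ => hmem i) hinj
        have hsum : ((Finset.range T).sum fun i =>
            if S + i + 1 ≤ M then γt ^ (S + i) else 0) = 0 := by
          apply Finset.sum_eq_zero
          intro i _
          rw [if_neg]
          omega
        rw [hsum, zero_div, mul_zero]
        exact hε.le
      · -- d ≥ η_M and d < η a : a must be one of the top-M sellers, small gap
        have haM : (a : ℕ) < M := by
          by_contra h
          push_neg at h
          rcases lt_or_eq_of_le h with h' | h'
          · have := hηdec ⟨M, hMlt⟩ a h'
            linarith
          · have ha' : a = ⟨M, hMlt⟩ := Fin.ext h'.symm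
            rw [ha'] at hda
            linarith
        have hη0 : η a ≤ η ⟨0, by omega⟩ := by
          rcases Nat.eq_zero_or_pos (a : ℕ) with h | h
          · have : a = ⟨0, by omega⟩ := Fin.ext h
            rw [this]
          · exact le_of_lt (hηdec ⟨0, by omega⟩ a h)
        have h2 := hgap a haM
        have h3 : η ⟨0, by omega⟩ - η ⟨M, hMlt⟩ < ε * (Real.exp 1 * α a) := by
          have hmin : min (Real.exp 1 * α a) 1 ≤ Real.exp 1 * α a := min_le_left _ _
          have := mul_le_mul_of_nonneg_left hmin hε.le
          calc η ⟨0, by omega⟩ - η ⟨M, hMlt⟩ < ε * min (Real.exp 1 * α a) 1 := h2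
            _ ≤ ε * (Real.exp 1 * α a) := this
        rw [hδ'a]
        have hfac : 0 ≤ (η a - d) / (Real.exp 1 * α a) :=
          div_nonneg (by linarith) (le_of_lt (mul_pos he0 (hα a)))
        calc ((η a - d) / (Real.exp 1 * α a)) *
              (((Finset.range T).sum fun i =>
                if S + i + 1 ≤ M then γt ^ (S + i) else 0) / (T : ℝ))
            ≤ ((η a - d) / (Real.exp 1 * α a)) * 1 := mul_le_mul_of_nonneg_left hr1 hfac
          _ = (η a - d) / (Real.exp 1 * α a) := mul_one _
          _ ≤ ε := by
              rw [div_le_iff₀ (mul_pos he0 (hα a))]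
              nlinarith
  linarith
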